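/- If a machine M is TA-compliant with the architecture HL and π(p) depends on {H} actions at α, then M,π,α ⊨ ¬K_L p. -/

import Mathlib

structure Machine (S A D O : Type) where
  s0 : S
  step : S → A → S
  dom : A → D
  obs : D → S → O

namespace Machine

def run {S A D O : Type} (M : Machine S A D O) (α : List A) : S :=
  α.foldl M.step M.s0

end Machine
/-- Elements of a view: actions or (group) observations. -/
inductive VE (A O' : Type) where
  | act : A → VE A O'
  | obs : O' → VE A O'

open Classical in
/-- Absorptive concatenation: `σ ∘ x` is `σ` if `x` equals the last element of `σ`,
and `σ ++ [x]` otherwise. -/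
noncomputable def absorb {X : Type} (σ : List X) (x : X) : List X :=
  if σ.getLast? = some x then σ else σ ++ [x]

open Classical in
/-- View of a group `G`, computed on the reversed action sequence. -/
noncomputable def viewR {S A D O : Type} (M : Machine S A D O) (G : Set D) :
    List A → List (VE A (G → O))
  | [] => [VE.obs (fun u : G => M.obs u.1 M.s0)]
  | a :: ρ =>
    let o : VE A (G → O) := VE.obs (fun u : G => M.obs u.1 (M.run ((a :: ρ).reverse)))
    if M.dom a ∈ G then viewR M G ρ ++ [VE.act a, o] else absorb (viewR M G ρ) o

/-- The view of group `G` of the action sequence `α`. -/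
noncomputable def view {S A D O : Type} (M : Machine S A D O) (G : Set D) (α : List A) :
    List (VE A (G → O)) :=
  viewR M G α.reverse
/-- Values of the `ta` function: nested tuples of actions. -/
inductive TA (A : Type) where
  | eps : TA A
  | node : TA A → TA A → A → TA A

open Classical in
/-- `ta`, computed on the reversed action sequence. -/
noncomputable def taR {A D : Type} (P : D → D → Prop) (dm : A → D) :
    List A → D → TA A
  | [], _ => TA.eps
  | a :: ρ, u =>
    if P (dm a) u then TA.node (taR P dm ρ u) (taR P dm ρ (dm a)) a
    else taR P dm ρ u

/-- `ta P dm α u` : maximal information domain `u` is permitted to have after `α`. -/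
noncomputable def ta {A D : Type} (P : D → D → Prop) (dm : A → D) (α : List A) (u : D) :
    TA A :=
  taR P dm α.reverse u

/-- TA-compliance of a machine with the information-flow policy `P`. -/
def TACompliant {S A D O : Type} (M : Machine S A D O) (P : D → D → Prop) : Prop :=
  ∀ (u : D) (α α' : List A), ta P M.dom α u = ta P M.dom α' u →
    M.obs u (M.run α) = M.obs u (M.run α')
/-- Formulas of the epistemic logic (without distributed knowledge). -/
inductive Formula (PC D : Type) where
  | tru : Formula PC D
  | atom : PC → Formula PC D
  | neg : Formula PC D → Formula PC D
  | conj : Formula PC D → Formula PC D → Formula PC D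
  | know : Set D → Formula PC D → Formula PC D

/-- Satisfaction relation `M,π,α ⊨ φ`. -/
def sat {S A D O PC : Type} (M : Machine S A D O) (π : PC → Set (List A)) :
    List A → Formula PC D → Prop
  | _, .tru => True
  | α, .atom p => α ∈ π p
  | α, .neg φ => ¬ sat M π α φ
  | α, .conj φ ψ => sat M π α φ ∧ sat M π α ψ
  | α, .know G φ => ∀ α', view M G α' = view M G α → sat M π α' φ
open Classical in
/-- `restr dm G α` : subsequence of `α` of actions whose domain lies in `G`. -/
noncomputable def restr {A D : Type} (dm : A → D) (G : Set D) (α : List A) : List A :=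
  α.filter (fun a => decide (dm a ∈ G))

/-- Proposition `X` depends on `G` actions at `α`. -/
def MDependsOn {A D : Type} (dm : A → D) (G : Set D) (X : Set (List A)) (α : List A) :
    Prop :=
  ∃ β : List A, restr dm Gᶜ α = restr dm Gᶜ β ∧ (α ∈ X ↔ β ∉ X)

/-- The two domains of the architecture `HL`. -/
inductive HLDom where
  | H : HLDom
  | L : HLDom
deriving DecidableEq

/-- The information-flow policy of the architecture `HL`:
`{(L,L), (H,H), (L,H)}`. -/
def HLrel : HLDom → HLDom → Prop := fun u v =>
  (u = HLDom.L ∧ v = HLDom.L) ∨ (u = HLDom.H ∧ v = HLDom.H) ∨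
    (u = HLDom.L ∧ v = HLDom.H)


/-!
Under `HL` nothing flows into `L` except from `L` itself, so by TA-compliance `L`'s
observations, and hence its whole view, are functions of the subsequence of `L` actions.
Dependence on `H` actions provides a `β` with the same `L` actions as `α` but the opposite
truth value of `p`; `L` cannot distinguish `α` from `β`, so it does not know `p` at `α`.
-/

section Restr

variable {A D : Type} (dm : A → D) (G : Set D)

lemma restr_cons_of_mem {a : A} (ha : dm a ∈ G) (ρ : List A) :
    restr dm G (a :: ρ) = a :: restr dm G ρ :=
  List.filter_cons_of_pos (by simpa using ha)

lemma restr_cons_of_notMem {a : A} (ha : dm a ∉ G) (ρ : List A) :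
    restr dm G (a :: ρ) = restr dm G ρ :=
  List.filter_cons_of_neg (by simpa using ha)

lemma restr_reverse (α : List A) : restr dm G α.reverse = (restr dm G α).reverse :=
  List.filter_reverse

lemma restr_restr (α : List A) : restr dm G (restr dm G α) = restr dm G α := by
  simp only [restr, List.filter_filter, Bool.and_self]

end Restr

lemma taR_restr {A D : Type} (P : D → D → Prop) (dm : A → D) {G : Set D}
    (hG : ∀ v w, P v w → w ∈ G → v ∈ G) (ρ : List A) {u : D} (hu : u ∈ G) :
    taR P dm (restr dm G ρ) u = taR P dm ρ u := by
  induction ρ generalizing u with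
  | nil => rfl
  | cons a ρ ih =>
    by_cases ha : dm a ∈ G
    · rw [restr_cons_of_mem dm G ha]
      simp only [taR, ih hu, ih ha]
    · have hPa : ¬ P (dm a) u := fun hP => ha (hG _ _ hP hu)
      rw [restr_cons_of_notMem dm G ha]
      simp only [taR, if_neg hPa, ih hu]

lemma TACompliant.obs_eq_of_restr_eq {S A D O : Type} {M : Machine S A D O}
    {P : D → D → Prop} (hTA : TACompliant M P) {G : Set D}
    (hG : ∀ v w, P v w → w ∈ G → v ∈ G) {α β : List A}
    (h : restr M.dom G α = restr M.dom G β) {u : D} (hu : u ∈ G) :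
    M.obs u (M.run α) = M.obs u (M.run β) := by
  refine hTA u α β ?_
  unfold ta
  rw [← taR_restr P M.dom hG _ hu, ← taR_restr P M.dom hG β.reverse hu,
    restr_reverse, restr_reverse, h]

section View

variable {S A D O : Type} (M : Machine S A D O) (G : Set D)

lemma viewR_getLast? (ρ : List A) :
    (viewR M G ρ).getLast? = some (VE.obs fun u : G => M.obs u.1 (M.run ρ.reverse)) := by
  cases ρ with
  | nil => simp [viewR, Machine.run]
  | cons a ρ =>
    by_cases ha : M.dom a ∈ G
    · simp [viewR, ha]
    · simp only [viewR, if_neg ha, absorb]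
      split
      · assumption
      · simp

variable {M G}

lemma viewR_restr
    (hobs : ∀ α β, restr M.dom G α = restr M.dom G β →
      ∀ u ∈ G, M.obs u (M.run α) = M.obs u (M.run β))
    (ρ : List A) : viewR M G (restr M.dom G ρ) = viewR M G ρ := by
  induction ρ with
  | nil => rfl
  | cons a ρ ih =>
    by_cases ha : M.dom a ∈ G
    · have hrun : (fun u : G => M.obs u.1 (M.run (a :: restr M.dom G ρ).reverse)) =
          fun u : G => M.obs u.1 (M.run (a :: ρ).reverse) :=
        funext fun u => hobs _ _ (by
          rw [restr_reverse, restr_reverse, restr_cons_of_mem _ _ ha,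
            restr_cons_of_mem _ _ ha, restr_restr]) u.1 u.2
      rw [restr_cons_of_mem _ _ ha]
      simp only [viewR, if_pos ha, ih, hrun]
    · -- an action outside `G` leaves the observation of `G` unchanged, so it is absorbed
      have hrun : (fun u : G => M.obs u.1 (M.run (a :: ρ).reverse)) =
          fun u : G => M.obs u.1 (M.run ρ.reverse) :=
        funext fun u => hobs _ _ (by
          rw [restr_reverse, restr_reverse, restr_cons_of_notMem _ _ ha]) u.1 u.2
      rw [restr_cons_of_notMem _ _ ha]
      simp only [viewR, if_neg ha, ih]
      rw [hrun, absorb, if_pos (viewR_getLast? M G ρ)]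

lemma view_eq_of_restr_eq
    (hobs : ∀ α β, restr M.dom G α = restr M.dom G β →
      ∀ u ∈ G, M.obs u (M.run α) = M.obs u (M.run β))
    {α β : List A} (h : restr M.dom G α = restr M.dom G β) : view M G α = view M G β := by
  unfold view
  rw [← viewR_restr hobs α.reverse, ← viewR_restr hobs β.reverse,
    restr_reverse, restr_reverse, h]

end View

lemma mem_L_of_HLrel (v w : HLDom) (h : HLrel v w) (hw : w ∈ ({HLDom.L} : Set HLDom)) :
    v ∈ ({HLDom.L} : Set HLDom) := by
  rcases h with ⟨rfl, -⟩ | ⟨-, rfl⟩ | ⟨-, rfl⟩ <;> simp_all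

lemma HLDom.compl_H : ({HLDom.H}ᶜ : Set HLDom) = {HLDom.L} := by
  ext v
  cases v <;> simp

/-- if `M` is TA-compliant with `HL` and `π(p)` depends on `{H}`
actions at `α`, then `M,π,α ⊨ ¬K_L p`. -/
theorem statement4 {S A O PC : Type} (M : Machine S A HLDom O)
    (hTA : TACompliant M HLrel) (π : PC → Set (List A)) (p : PC) (α : List A)
    (hdep : MDependsOn M.dom {HLDom.H} (π p) α) :
    sat M π α (Formula.neg (Formula.know {HLDom.L} (Formula.atom p))) := by
  obtain ⟨β, hαβ, hiff⟩ := hdep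
  rw [HLDom.compl_H] at hαβ
  have hview : view M {HLDom.L} β = view M {HLDom.L} α :=
    view_eq_of_restr_eq (fun _ _ h _ hu => hTA.obs_eq_of_restr_eq mem_L_of_HLrel h hu) hαβ.symm
  intro hK
  exact hiff.mp (hK α rfl) (hK β hview)
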